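/- For every dimension d ≥ 1, every k ≥ 1, every λ > 0, and every ε with 0 < ε < 1, one has a_{k,λ(1−ε)} ≥ a_{k,λ} − ε/(1−ε). -/

import Mathlib

/-
Rescaling the cube: a Poisson process of intensity `λ` on `[0,s]^d`, where `λ s^d = λ' t^d`,
has the same Poisson number of points as one of intensity `λ' ≤ λ` on `[0,t]^d`, and the
two normalisations agree. Mapped to the unit cube, the first has connection radius `1/s ≥ 1/t`;
a larger radius adds edges and can only shrink the largest `k`-colourable subset. Hence
`\bar F_{k,λ}(s) ≤ \bar F_{k,λ'}(t)`, so `a_{k,λ}` is nonincreasing in `λ`.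
-/

open MeasureTheory ProbabilityTheory Filter

noncomputable instance instDecEqEuclidean (d : ℕ) :
    DecidableEq (EuclideanSpace ℝ (Fin d)) := Classical.decEq _

/-- `maxColorable d k r V` is the maximum number of vertices of the geometric
graph `G_r(V)` (edges between distinct points of `V` at Euclidean distance at
most `r`) that can be properly colored with `k` colors, i.e. the maximum
cardinality of a subset `S ⊆ V` admitting a proper `k`-coloring. -/
noncomputable def maxColorable (d k : ℕ) (r : ℝ)
    (V : Finset (EuclideanSpace ℝ (Fin d))) : ℕ :=
  sSup {m : ℕ | ∃ S : Finset (EuclideanSpace ℝ (Fin d)), S ⊆ V ∧ S.card = m ∧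
    ∃ c : EuclideanSpace ℝ (Fin d) → Fin k,
      ∀ u ∈ S, ∀ v ∈ S, u ≠ v → dist u v ≤ r → c u ≠ c v}

/-- The unit cube `[0,1]^d`. -/
def unitCube (d : ℕ) : Set (EuclideanSpace ℝ (Fin d)) :=
  {x | ∀ i, x i ∈ Set.Icc (0 : ℝ) 1}

/-- The uniform distribution on the unit cube `[0,1]^d` (Lebesgue measure
restricted to the cube, which has total mass one). -/
noncomputable def uniformCube (d : ℕ) : Measure (EuclideanSpace ℝ (Fin d)) :=
  volume.restrict (unitCube d)

/-- `EH d k r n = E[H_{k,r}(n)] = E[N_{k,r}({X_1,…,X_n})]` for `X_1,…,X_n`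
i.i.d. uniform on the unit cube `[0,1]^d`. -/
noncomputable def EH (d k : ℕ) (r : ℝ) (n : ℕ) : ℝ :=
  ∫ x : Fin n → EuclideanSpace ℝ (Fin d),
    (maxColorable d k r (Finset.image x Finset.univ) : ℝ)
    ∂(Measure.pi fun _ => uniformCube d)

/-- `EF d k lam t = E[F_{k,lam}(t)] = ∑_n P(Po(lam t^d) = n) E[H_{k,1/t}(n)]`,
the expected maximum number of `k`-colorable vertices of the unit-distance
geometric graph on a Poisson process of intensity `lam` in `[0,t]^d`. -/
noncomputable def EF (d k : ℕ) (lam t : ℝ) : ℝ :=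
  ∑' n : ℕ, poissonPMFReal (Real.toNNReal (lam * t ^ d)) n * EH d k (1 / t) n

/-- The normalized expectation `\bar F_{k,lam}(t) = E[F_{k,lam}(t)]/(lam t^d)`. -/
noncomputable def Fbar (d k : ℕ) (lam t : ℝ) : ℝ :=
  EF d k lam t / (lam * t ^ d)

/-- The constant `a_{k,lam} = inf_{t>0} \bar F_{k,lam}(t)`. -/
noncomputable def aConst (d k : ℕ) (lam : ℝ) : ℝ :=
  sInf {x : ℝ | ∃ t : ℝ, 0 < t ∧ x = Fbar d k lam t}

/-- The volume `V_d(r) = π^{d/2} r^d / Γ(d/2 + 1)` of the `d`-dimensional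
Euclidean ball of radius `r`. -/
noncomputable def ballVol (d : ℕ) (r : ℝ) : ℝ :=
  Real.pi ^ ((d : ℝ) / 2) * r ^ d / Real.Gamma ((d : ℝ) / 2 + 1)

set_option linter.deprecated false

variable {d k : ℕ}

def colorableCards (d k : ℕ) (r : ℝ) (V : Finset (EuclideanSpace ℝ (Fin d))) : Set ℕ :=
  {m | ∃ S ⊆ V, S.card = m ∧ ∃ c : EuclideanSpace ℝ (Fin d) → Fin k,
    ∀ u ∈ S, ∀ v ∈ S, u ≠ v → dist u v ≤ r → c u ≠ c v}

lemma bddAbove_colorableCards (r : ℝ) (V : Finset (EuclideanSpace ℝ (Fin d))) :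
    BddAbove (colorableCards d k r V) :=
  ⟨V.card, fun _ ⟨_, hSV, hS, _⟩ => hS ▸ Finset.card_le_card hSV⟩

lemma card_le_maxColorable {r : ℝ} {S V : Finset (EuclideanSpace ℝ (Fin d))} (hSV : S ⊆ V)
    (c : EuclideanSpace ℝ (Fin d) → Fin k)
    (hc : ∀ u ∈ S, ∀ v ∈ S, u ≠ v → dist u v ≤ r → c u ≠ c v) :
    S.card ≤ maxColorable d k r V :=
  le_csSup (bddAbove_colorableCards r V) ⟨S, hSV, rfl, c, hc⟩

lemma exists_card_eq_maxColorable (hk : 0 < k) (r : ℝ) (V : Finset (EuclideanSpace ℝ (Fin d))) :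
    ∃ S ⊆ V, S.card = maxColorable d k r V ∧ ∃ c : EuclideanSpace ℝ (Fin d) → Fin k,
      ∀ u ∈ S, ∀ v ∈ S, u ≠ v → dist u v ≤ r → c u ≠ c v :=
  Nat.sSup_mem (s := colorableCards d k r V)
    ⟨0, ∅, V.empty_subset, rfl, fun _ => ⟨0, hk⟩, by simp⟩ (bddAbove_colorableCards r V)

lemma maxColorable_le_card (r : ℝ) (V : Finset (EuclideanSpace ℝ (Fin d))) :
    maxColorable d k r V ≤ V.card :=
  csSup_le' fun _ ⟨_, hSV, hS, _⟩ => hS ▸ Finset.card_le_card hSV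

lemma maxColorable_antitone {r r' : ℝ} (h : r ≤ r') (V : Finset (EuclideanSpace ℝ (Fin d))) :
    maxColorable d k r' V ≤ maxColorable d k r V :=
  csSup_le_csSup' (bddAbove_colorableCards r V)
    fun _ ⟨S, hSV, hS, c, hc⟩ =>
      ⟨S, hSV, hS, c, fun u hu v hv huv hd => hc u hu v hv huv (hd.trans h)⟩

-- Colours attached to indices rather than points make the condition measurable in `x`.
lemma le_maxColorable_image_iff (hk : 0 < k) (r : ℝ) {n m : ℕ}
    (x : Fin n → EuclideanSpace ℝ (Fin d)) :
    m ≤ maxColorable d k r (Finset.univ.image x) ↔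
      ∃ T : Finset (Fin n), ∃ σ : Fin n → Fin k, m ≤ T.card ∧ Set.InjOn x T ∧
        ∀ i ∈ T, ∀ j ∈ T, i ≠ j → dist (x i) (x j) ≤ r → σ i ≠ σ j := by
  constructor
  · intro hm
    obtain ⟨S, hSV, hS, c, hc⟩ := exists_card_eq_maxColorable hk r (Finset.univ.image x)
    obtain ⟨T, -, hinj, rfl⟩ := Finset.exists_subset_injOn_image_eq_of_surjOn Set.univ S
      fun v hv => by simpa using hSV hv
    refine ⟨T, c ∘ x, ?_, hinj, fun i hi j hj hij => ?_⟩
    · rwa [← Finset.card_image_of_injOn hinj, hS]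
    · exact hc _ (Finset.mem_image_of_mem x hi) _ (Finset.mem_image_of_mem x hj)
        fun h => hij (hinj hi hj h)
  · rintro ⟨T, σ, hm, hinj, hσ⟩
    have hinj' : Function.Injective fun i : T => x i := fun i j h => Subtype.ext (hinj i.2 j.2 h)
    let c := Function.extend (fun i : T => x i) (fun i => σ i) fun _ => ⟨0, hk⟩
    have hc : ∀ i ∈ T, c (x i) = σ i := fun i hi => hinj'.extend_apply _ _ ⟨i, hi⟩
    refine hm.trans (Finset.card_image_of_injOn hinj ▸ card_le_maxColorable
      (Finset.image_subset_image T.subset_univ) c ?_)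
    simp only [Finset.mem_image]
    rintro _ ⟨i, hi, rfl⟩ _ ⟨j, hj, rfl⟩ hij hdist
    rw [hc i hi, hc j hj]
    exact hσ i hi j hj (fun h => hij (h ▸ rfl)) hdist

lemma measurable_maxColorable (hk : 0 < k) (r : ℝ) (n : ℕ) :
    Measurable fun x : Fin n → EuclideanSpace ℝ (Fin d) =>
      maxColorable d k r (Finset.univ.image x) := by
  refine measurable_of_Ici fun m => ?_
  simp only [Set.preimage, Set.mem_Ici, le_maxColorable_image_iff hk]
  refine Measurable.setOf (Measurable.exists fun T => Measurable.exists fun σ => ?_)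
  have heq (i j : Fin n) :
      Measurable fun x : Fin n → EuclideanSpace ℝ (Fin d) => x i = x j :=
    measurableSet_setOfPred.1 (measurableSet_eq_fun (measurable_pi_apply i) (measurable_pi_apply j))
  have hle (i j : Fin n) :
      Measurable fun x : Fin n → EuclideanSpace ℝ (Fin d) => dist (x i) (x j) ≤ r :=
    measurableSet_setOfPred.1 (measurableSet_le (by fun_prop) measurable_const)
  unfold Set.InjOn
  fun_prop

lemma volume_unitCube (d : ℕ) : volume (unitCube d) = 1 := by
  have hcube : unitCube d = WithLp.ofLp ⁻¹' Set.univ.pi fun _ : Fin d => Set.Icc (0 : ℝ) 1 := by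
    ext x
    simp only [unitCube, Set.mem_setOf_eq, Set.mem_preimage, Set.mem_univ_pi]
  rw [hcube, (PiLp.volume_preserving_ofLp (Fin d)).measure_preimage
    (MeasurableSet.univ_pi fun _ => measurableSet_Icc).nullMeasurableSet, volume_pi_pi]
  simp

instance (d : ℕ) : IsProbabilityMeasure (uniformCube d) :=
  ⟨by rw [uniformCube, Measure.restrict_apply_univ, volume_unitCube]⟩

lemma maxColorable_image_le (r : ℝ) {n : ℕ} (x : Fin n → EuclideanSpace ℝ (Fin d)) :
    maxColorable d k r (Finset.univ.image x) ≤ n :=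
  (maxColorable_le_card r _).trans (Finset.card_image_le.trans_eq (Finset.card_fin n))

lemma EH_nonneg (r : ℝ) (n : ℕ) : 0 ≤ EH d k r n :=
  integral_nonneg fun _ => Nat.cast_nonneg _

lemma EH_le (r : ℝ) (n : ℕ) : EH d k r n ≤ n := by
  refine (integral_mono_of_nonneg (ae_of_all _ fun _ => Nat.cast_nonneg _)
    (integrable_const (n : ℝ))
    (ae_of_all _ fun x => Nat.cast_le.2 (maxColorable_image_le r x))).trans ?_
  simp

lemma EH_antitone (hk : 0 < k) {r r' : ℝ} (h : r ≤ r') (n : ℕ) : EH d k r' n ≤ EH d k r n := by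
  have hint : Integrable (fun x : Fin n → EuclideanSpace ℝ (Fin d) =>
      (maxColorable d k r (Finset.univ.image x) : ℝ)) (Measure.pi fun _ => uniformCube d) :=
    Integrable.of_bound
      (measurable_from_top.comp (measurable_maxColorable hk r n)).aestronglyMeasurable n
      (ae_of_all _ fun x => by simpa using maxColorable_image_le r x)
  exact integral_mono_of_nonneg (ae_of_all _ fun _ => Nat.cast_nonneg _) hint
    (ae_of_all _ fun x => Nat.cast_le.2 (maxColorable_antitone h _))

-- `n ≤ 2 ^ n` turns the Poisson weights into the summable series of `exp (2μ)`.
lemma summable_poissonPMFReal_mul {g : ℕ → ℝ} (μ : NNReal) (hg₀ : ∀ n, 0 ≤ g n)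
    (hg : ∀ n, g n ≤ n) : Summable fun n => poissonPMFReal μ n * g n := by
  refine Summable.of_nonneg_of_le (fun n => mul_nonneg poissonPMFReal_nonneg (hg₀ n))
    (fun n => ?_) ((Real.summable_pow_div_factorial (2 * μ)).mul_left (Real.exp (-μ)))
  calc poissonPMFReal μ n * g n ≤ poissonPMFReal μ n * 2 ^ n :=
        mul_le_mul_of_nonneg_left ((hg n).trans (mod_cast Nat.lt_two_pow_self.le))
          poissonPMFReal_nonneg
    _ = Real.exp (-μ) * ((2 * μ) ^ n / n.factorial) := by
        rw [poissonPMFReal, mul_pow]; ring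

lemma EF_nonneg (lam t : ℝ) : 0 ≤ EF d k lam t :=
  tsum_nonneg fun n => mul_nonneg poissonPMFReal_nonneg (EH_nonneg _ n)

lemma EF_le_EF (hk : 0 < k) {lam lam' s t : ℝ} (hs : 0 < s) (hst : s ≤ t)
    (hmean : lam * s ^ d = lam' * t ^ d) : EF d k lam s ≤ EF d k lam' t := by
  rw [EF, EF, hmean]
  exact Summable.tsum_le_tsum
    (fun n => mul_le_mul_of_nonneg_left (EH_antitone hk (one_div_le_one_div_of_le hs hst) n)
      poissonPMFReal_nonneg)
    (summable_poissonPMFReal_mul _ (EH_nonneg _) (EH_le _))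
    (summable_poissonPMFReal_mul _ (EH_nonneg _) (EH_le _))

lemma Fbar_le_Fbar (hk : 0 < k) {lam lam' s t : ℝ} (hs : 0 < s) (hst : s ≤ t)
    (hmean : lam * s ^ d = lam' * t ^ d) (hpos : 0 ≤ lam * s ^ d) :
    Fbar d k lam s ≤ Fbar d k lam' t := by
  rw [Fbar, Fbar, ← hmean]
  exact div_le_div_of_nonneg_right (EF_le_EF hk hs hst hmean) hpos

lemma Fbar_nonneg {lam t : ℝ} (hlam : 0 ≤ lam) (ht : 0 ≤ t) : 0 ≤ Fbar d k lam t :=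
  div_nonneg (EF_nonneg lam t) (by positivity)

lemma aConst_antitone (hd : d ≠ 0) (hk : 0 < k) {lam lam' : ℝ} (hlam' : 0 < lam')
    (h : lam' ≤ lam) : aConst d k lam ≤ aConst d k lam' := by
  have hlam : 0 < lam := hlam'.trans_le h
  refine le_csInf ⟨_, 1, one_pos, rfl⟩ ?_
  rintro _ ⟨t, ht, rfl⟩
  set c := lam' / lam
  have hc : 0 < c := div_pos hlam' hlam
  have hc1 : c ≤ 1 := (div_le_one hlam).2 h
  set s := t * c ^ (d⁻¹ : ℝ)
  have hs : 0 < s := mul_pos ht (Real.rpow_pos_of_pos hc _)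
  have hst : s ≤ t := mul_le_of_le_one_right ht.le (Real.rpow_le_one hc.le hc1 (by positivity))
  have hmean : lam * s ^ d = lam' * t ^ d := by
    rw [mul_pow, Real.rpow_inv_natCast_pow hc.le hd, mul_left_comm,
      mul_div_cancel₀ _ hlam.ne', mul_comm]
  calc aConst d k lam ≤ Fbar d k lam s :=
        csInf_le ⟨0, fun _ ⟨_, hu, hx⟩ => hx ▸ Fbar_nonneg hlam.le hu.le⟩ ⟨s, hs, rfl⟩
    _ ≤ Fbar d k lam' t := Fbar_le_Fbar hk hs hst hmean (by positivity)

/-- `a_{k,λ(1−ε)} ≥ a_{k,λ} − ε/(1−ε)` for `0 < ε < 1`. -/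
theorem aConst_ge (d k : ℕ) (hd : 1 ≤ d) (hk : 1 ≤ k) (lam : ℝ) (hlam : 0 < lam)
    (ε : ℝ) (hε : 0 < ε) (hε1 : ε < 1) :
    aConst d k lam - ε / (1 - ε) ≤ aConst d k (lam * (1 - ε)) := by
  have h1ε : 0 < 1 - ε := sub_pos.2 hε1
  calc aConst d k lam - ε / (1 - ε) ≤ aConst d k lam := sub_le_self _ (by positivity)
    _ ≤ aConst d k (lam * (1 - ε)) :=
      aConst_antitone (by omega) hk (by positivity) (mul_le_of_le_one_right hlam.le (by linarith))
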